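/- Let C, C' be neighbouring columns of D of height t with C to the left of C', and let ℓ_∗ denote the unique left-going line of ℓ(D) labelled ∗ ending at the box C' ∩ R_t. Then every box of D lying in rows R_1,…,R_t in a column from C (inclusive) up to but excluding C' has exactly one right-going line of ℓ(D) labelled 1, whose right end-point lies in rows R_1,…,R_t in a column strictly to the right of C up to and including C', unless the right-going line of ℓ(D) issuing from that box is the line ℓ_∗ (labelled ∗). -/

import Mathlib

open scoped Classical

/-- height of column `j` of the diagram (columns numbered from 1). -/
def hgt (c : List ℕ) (j : ℕ) : ℕ := c.getD (j - 1) 0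

/-- number of boxes in the columns strictly to the left of column `j`. -/
def off (c : List ℕ) (j : ℕ) : ℕ := (c.take (j - 1)).sum

/-- `(i, j)` (row `i`, column `j`) is a box of the diagram `D`. -/
def IsBox (c : List ℕ) (i j : ℕ) : Prop :=
  1 ≤ j ∧ j ≤ c.length ∧ 1 ≤ i ∧ i ≤ hgt c j

/-- the entry of the box `(i, j)` in the tableau `T`. -/
def Tentry (c : List ℕ) (i j : ℕ) : ℕ := off c j + i

/-- the column of the box of `D` carrying entry `m` in `T`. -/
noncomputable def colOf (c : List ℕ) (m : ℕ) : ℕ := sInf {j | m ≤ (c.take j).sum}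

/-- the row of the box of `D` carrying entry `m` in `T`. -/
noncomputable def rowOf (c : List ℕ) (m : ℕ) : ℕ := m - off c (colOf c m)

/-- the total order `≼` on entries: increasing down columns, then from right to left. -/
def ple (c : List ℕ) (a b : ℕ) : Prop :=
  colOf c b < colOf c a ∨ (colOf c a = colOf c b ∧ a ≤ b)

/-- the strict version of `≼`. -/
def plt (c : List ℕ) (a b : ℕ) : Prop :=
  colOf c b < colOf c a ∨ (colOf c a = colOf c b ∧ a < b)

/-- column `j` has a left neighbour in `D`. -/
def HasLeftNb (c : List ℕ) (j : ℕ) : Prop :=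
  ∃ i, 1 ≤ i ∧ i < j ∧ hgt c i = hgt c j ∧
    ∀ i', i < i' → i' < j → hgt c i' ≠ hgt c j

/-- the `j`-th column of the tableau `T`, rows to optional entries. -/
def Tcol (c : List ℕ) (j : ℕ) : ℕ → Option ℕ := fun i =>
  if 1 ≤ i ∧ i ≤ hgt c j then some (Tentry c i j) else none

/-- one step of the propagation rule building `T(∞)`: the entry (if any) in row `t`
of column `j - 1` of `T(∞)` (given by `prev`) is propagated into the partially
built column `j` (given by `cur`). -/
noncomputable def propStep (c : List ℕ) (j : ℕ) (prev : ℕ → Option ℕ)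
    (cur : ℕ → Option ℕ) (t : ℕ) : ℕ → Option ℕ :=
  match prev t with
  | none => cur
  | some l =>
    if hgt c j = t then
      if HasLeftNb c j ∧ cur (t + 1) = none then
        Function.update cur (t + 1) (some l)
      else cur
    else
      if cur t = none then Function.update cur t (some l) else cur

/-- the `j`-th column of the composition tableau `T(∞)`. -/
noncomputable def TinfCol (c : List ℕ) : ℕ → ℕ → Option ℕ
  | 0 => fun _ => none
  | 1 => Tcol c 1
  | j + 2 =>
      (List.range (c.sum + 2)).foldl
        (propStep c (j + 2) (TinfCol c (j + 1))) (Tcol c (j + 2))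

/-- labels of lines: `1` or `∗`. -/
inductive Lab : Type
  | one : Lab
  | star : Lab
deriving DecidableEq

/-- maximal height among the columns `1, …, j - 1`. -/
def maxHgt (c : List ℕ) (j : ℕ) : ℕ := (c.take (j - 1)).foldr max 0

/-- the maximal column height of the diagram `D`. -/
def maxH (c : List ℕ) : ℕ := c.foldr max 0

/-- `LineB c a i j lab` : the line family `ℓ(D)` contains a line labelled `lab`
whose left end-point is the box of `D` carrying entry `a` in `T` and whose right
end-point is the box `(i, j)` (row `i` of column `C_j`). -/
def LineB (c : List ℕ) (a i j : ℕ) (lab : Lab) : Prop :=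
  2 ≤ j ∧ j ≤ c.length ∧ 1 ≤ i ∧
    (match lab with
     | Lab.one =>
         (maxHgt c j < hgt c j ∧ i ≤ maxHgt c j + 1 ∧ TinfCol c (j - 1) i = some a)
       ∨ (hgt c j ≤ maxHgt c j ∧ i + 1 ≤ hgt c j ∧ TinfCol c (j - 1) i = some a)
       ∨ (hgt c j ≤ maxHgt c j ∧ i = hgt c j ∧
           ¬(∃ j', 1 ≤ j' ∧ j' < j ∧ hgt c j' = hgt c j) ∧
           TinfCol c (j - 1) i = some a)
       ∨ (hgt c j ≤ maxHgt c j ∧ i = hgt c j ∧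
           (∃ j', 1 ≤ j' ∧ j' < j ∧ hgt c j' = hgt c j) ∧
           TinfCol c (j - 1) (i + 1) = some a)
     | Lab.star =>
         hgt c j ≤ maxHgt c j ∧ i = hgt c j ∧
           (∃ j', 1 ≤ j' ∧ j' < j ∧ hgt c j' = hgt c j) ∧
           TinfCol c (j - 1) i = some a)

/-- `LineE c a b lab` : `ℓ(D)` contains a line labelled `lab` joining the box of `D`
carrying entry `a` in `T` (on the left) to the box carrying entry `b` (on the right). -/
def LineE (c : List ℕ) (a b : ℕ) (lab : Lab) : Prop :=
  ∃ i j, LineB c a i j lab ∧ b = Tentry c i j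

/-- the box `(i, j)` of `D` is right extremal relative to `ℓ(D)`. -/
def RExt (c : List ℕ) (i j : ℕ) : Prop :=
  IsBox c i j ∧ ∀ i' j', ¬ LineB c (Tentry c i j) i' j' Lab.one

/-- `c` is a composition of `n`. -/
def IsComposition (c : List ℕ) (n : ℕ) : Prop :=
  c.sum = n ∧ ∀ x ∈ c, 0 < x

/-!
In `T(∞)` an entry is carried from one column to the next by a deterministic rule (`nextRow`),
so its occurrences form a path through a run of consecutive columns, one box per column. A
right-going line labelled `1` issues from an entry exactly where this path is stopped, which
gives uniqueness. A path starting in rows `≤ t` in a column from `C` to just before `C'` moves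
down only on meeting a column whose height is its current row; no column strictly between `C`
and `C'` has height `t`, so the path stays in rows `≤ t`. Arriving at `C'` in a row `< t` it
meets a box of `T` and is stopped; arriving in row `t` it is the left end-point of `ℓ_∗`.
-/

lemma List.sum_take_add_one_getD (l : List ℕ) (m : ℕ) :
    (l.take (m + 1)).sum = (l.take m).sum + l.getD m 0 := by
  rw [List.take_add_one, List.sum_append, List.getD_eq_getElem?_getD]
  cases l[m]? <;> simp

section Diagram

variable {c : List ℕ}

lemma sum_take_eq_off_add_hgt {j : ℕ} (hj : 1 ≤ j) : (c.take j).sum = off c j + hgt c j := by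
  obtain ⟨k, rfl⟩ : ∃ k, j = k + 1 := ⟨j - 1, by omega⟩
  exact List.sum_take_add_one_getD c k

lemma hgt_le_sum (j : ℕ) : hgt c j ≤ c.sum := by
  have h := List.sum_take_add_one_getD c (j - 1)
  have := (List.take_sublist (j - 1 + 1) c).sum_le_sum (fun _ _ => Nat.zero_le _)
  unfold hgt
  omega

lemma Tentry_le_sum_take {i j : ℕ} (hj : 1 ≤ j) (hi : i ≤ hgt c j) :
    Tentry c i j ≤ (c.take j).sum := by
  rw [sum_take_eq_off_add_hgt hj, Tentry]
  omega

lemma sum_take_lt_Tentry {i j m : ℕ} (hi : 1 ≤ i) (hm : m < j) : (c.take m).sum < Tentry c i j := by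
  have := List.monotone_sum_take c (show m ≤ j - 1 by omega)
  simp only [Tentry, off] at *
  omega

lemma hgt_le_maxHgt {j' j : ℕ} (hj' : 1 ≤ j') (hj : j' < j) : hgt c j' ≤ maxHgt c j := by
  rcases lt_or_ge (j' - 1) c.length with hlt | hge
  · refine List.le_max_of_le' 0 (List.mem_take_iff_getElem.mpr ⟨j' - 1, by omega, rfl⟩) ?_
    rw [hgt, List.getD_eq_getElem c 0 hlt]
  · rw [hgt, List.getD_eq_default c 0 hge]
    exact Nat.zero_le _

lemma maxHgt_mono : Monotone (maxHgt c) := fun _ _ h =>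
  List.max_le_of_forall_le _ _ fun _ hx =>
    List.le_max_of_le' 0 ((List.take_prefix_take_left (by omega)).subset hx) le_rfl

lemma hasLeftNb_iff {j : ℕ} : HasLeftNb c j ↔ ∃ j', 1 ≤ j' ∧ j' < j ∧ hgt c j' = hgt c j := by
  refine ⟨fun ⟨j', h1, h2, h3, _⟩ => ⟨j', h1, h2, h3⟩, fun ⟨j', h1, h2, h3⟩ => ?_⟩
  let P : ℕ → Prop := fun x => 1 ≤ x ∧ hgt c x = hgt c j
  have hP : P (Nat.findGreatest P (j - 1)) := Nat.findGreatest_spec (by omega : j' ≤ j - 1) ⟨h1, h3⟩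
  have hle : Nat.findGreatest P (j - 1) ≤ j - 1 := Nat.findGreatest_le _
  exact ⟨_, hP.1, by omega, hP.2, fun i hi hij hne =>
    Nat.findGreatest_is_greatest hi (by omega) ⟨by omega, hne⟩⟩

lemma hgt_le_maxHgt_of_hasLeftNb {j : ℕ} (h : HasLeftNb c j) : hgt c j ≤ maxHgt c j := by
  obtain ⟨j', h1, h2, h3⟩ := hasLeftNb_iff.mp h
  exact h3 ▸ hgt_le_maxHgt h1 h2

end Diagram

/-- Column `j` after the rows `0, …, N - 1` of `prev` have been propagated into `Tcol c j`. -/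
noncomputable def partialCol (c : List ℕ) (j : ℕ) (prev : ℕ → Option ℕ) (N r : ℕ) : Option ℕ :=
  if 1 ≤ r ∧ r ≤ hgt c j then some (Tentry c r j)
  else if hgt c j + 1 = r ∧ HasLeftNb c j ∧ (prev (r - 1)).isSome ∧ r ≤ N then prev (r - 1)
  else if hgt c j < r ∧ r < N then prev r
  else none

lemma foldl_propStep {c : List ℕ} {j : ℕ} {prev : ℕ → Option ℕ} (hp0 : prev 0 = none) (N : ℕ) :
    (List.range N).foldl (propStep c j prev) (Tcol c j) = partialCol c j prev N := by
  induction N with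
  | zero =>
    funext r
    simp only [List.range_zero, List.foldl_nil, Tcol, partialCol]
    grind
  | succ N ih =>
    rw [List.range_succ, List.foldl_concat, ih]
    funext r
    unfold propStep
    cases hN : prev N with
    | none => simp only [partialCol]; grind
    | some l =>
      dsimp only
      split_ifs <;> simp only [partialCol, Function.update_apply] at * <;> grind

section TinfCol

variable {c : List ℕ}

lemma tinfCol_zero (m : ℕ) : TinfCol c m 0 = none := by
  match m with
  | 0 => rfl
  | 1 => simp [TinfCol, Tcol]
  | j + 2 =>
    rw [TinfCol, foldl_propStep (tinfCol_zero (j + 1))]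
    simp [partialCol]

lemma tinfCol_eq_partialCol {m : ℕ} (hm : 2 ≤ m) :
    TinfCol c m = partialCol c m (TinfCol c (m - 1)) (c.sum + 2) := by
  obtain ⟨j, rfl⟩ : ∃ j, m = j + 2 := ⟨m - 2, by omega⟩
  exact foldl_propStep (tinfCol_zero (j + 1)) _

lemma tinfCol_of_le_hgt {m r : ℕ} (hm : 1 ≤ m) (hr : 1 ≤ r) (hrh : r ≤ hgt c m) :
    TinfCol c m r = some (Tentry c r m) := by
  rcases (show m = 1 ∨ 2 ≤ m by omega) with rfl | hm
  · simp [TinfCol, Tcol, hr, hrh]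
  · simp [tinfCol_eq_partialCol hm, partialCol, hr, hrh]

lemma tinfCol_eq_none_of_sum_lt {r : ℕ} (hr : c.sum + 1 < r) (m : ℕ) : TinfCol c m r = none := by
  have := hgt_le_sum (c := c) m
  rcases (show m = 0 ∨ m = 1 ∨ 2 ≤ m by omega) with rfl | rfl | hm
  · rfl
  · simp [TinfCol, Tcol]
    omega
  · simp only [tinfCol_eq_partialCol hm, partialCol]
    grind

lemma tinfCol_of_hgt_lt {m r : ℕ} (hm : 2 ≤ m) (hr : hgt c m < r) :
    TinfCol c m r =
      if hgt c m + 1 = r ∧ HasLeftNb c m ∧ (TinfCol c (m - 1) (r - 1)).isSome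
      then TinfCol c (m - 1) (r - 1) else TinfCol c (m - 1) r := by
  by_cases hrs : c.sum + 1 < r
  · have := hgt_le_sum (c := c) m
    simp [tinfCol_eq_none_of_sum_lt hrs]
    omega
  · simp only [tinfCol_eq_partialCol hm, partialCol]
    grind

lemma tinfCol_eq_some_cases {m r a : ℕ} (h : TinfCol c m r = some a) :
    (1 ≤ m ∧ 1 ≤ r ∧ r ≤ hgt c m ∧ a = Tentry c r m) ∨
      (2 ≤ m ∧ hgt c m < r ∧ (TinfCol c (m - 1) r = some a ∨
        hgt c m + 1 = r ∧ HasLeftNb c m ∧ TinfCol c (m - 1) (r - 1) = some a)) := by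
  rcases (show m = 0 ∨ m = 1 ∨ 2 ≤ m by omega) with rfl | rfl | hm
  · simp [TinfCol] at h
  · simp only [TinfCol, Tcol] at h
    grind
  · rcases Nat.eq_zero_or_pos r with rfl | hr
    · simp [tinfCol_zero] at h
    rcases le_or_gt r (hgt c m) with hrh | hrh
    · rw [tinfCol_of_le_hgt (by omega) hr hrh] at h
      grind
    · rw [tinfCol_of_hgt_lt hm hrh] at h
      grind

lemma one_le_of_tinfCol_eq_some {m r a : ℕ} (h : TinfCol c m r = some a) : 1 ≤ m ∧ 1 ≤ r := by
  rcases tinfCol_eq_some_cases h with h' | h' <;> omega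

lemma tinfCol_le_sum_take {m r a : ℕ} (h : TinfCol c m r = some a) : a ≤ (c.take m).sum := by
  induction m generalizing r with
  | zero => simp [TinfCol] at h
  | succ m ih =>
    have hmono := List.monotone_sum_take c (Nat.le_succ m)
    rcases tinfCol_eq_some_cases h with ⟨hm, -, hrh, rfl⟩ | ⟨-, -, h' | ⟨-, -, h'⟩⟩
    · exact Tentry_le_sum_take hm hrh
    · exact (ih h').trans hmono
    · exact (ih h').trans hmono

lemma tinfCol_row_le {m r a : ℕ} (h : TinfCol c m r = some a) : r ≤ maxHgt c (m + 1) + 1 := by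
  induction m generalizing r with
  | zero => simp [TinfCol] at h
  | succ m ih =>
    have hmono : maxHgt c (m + 1) ≤ maxHgt c (m + 1 + 1) := maxHgt_mono (by omega)
    have hhgt : hgt c (m + 1) ≤ maxHgt c (m + 1 + 1) := hgt_le_maxHgt (by omega) (by omega)
    rcases tinfCol_eq_some_cases h with ⟨-, -, hrh, -⟩ | ⟨-, -, h' | ⟨hr, -, -⟩⟩
    · omega
    · have := ih h'
      omega
    · omega

lemma tinfCol_injective {m r₁ r₂ a : ℕ} (h₁ : TinfCol c m r₁ = some a)
    (h₂ : TinfCol c m r₂ = some a) : r₁ = r₂ := by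
  induction m generalizing r₁ r₂ with
  | zero => simp [TinfCol] at h₁
  | succ m ih =>
    -- entries carried over from column `m` are smaller than the `T`-entries of column `m + 1`
    have hsum : ∀ {r}, TinfCol c m r = some a → a < Tentry c 1 (m + 1) := fun h =>
      (tinfCol_le_sum_take h).trans_lt (sum_take_lt_Tentry le_rfl (Nat.lt_succ_self m))
    rcases tinfCol_eq_some_cases h₁ with ⟨-, hr₁, -, rfl⟩ | ⟨-, hr₁, h₁' | ⟨hr₁', -, h₁'⟩⟩ <;>
    rcases tinfCol_eq_some_cases h₂ with ⟨-, hr₂, -, ha⟩ | ⟨-, hr₂, h₂' | ⟨hr₂', -, h₂'⟩⟩ <;>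
    (try simp only [Nat.add_sub_cancel] at *) <;>
    first
    | (simp only [Tentry] at *; omega)
    | (have := ih h₁' h₂'; omega)
    | (have := hsum h₁'; simp only [Tentry] at *; omega)
    | (have := hsum h₂'; simp only [Tentry] at *; omega)

lemma isSome_tinfCol_of_isSome_succ {m r : ℕ} (hr : 1 ≤ r) (h : (TinfCol c m (r + 1)).isSome) :
    (TinfCol c m r).isSome := by
  induction m with
  | zero => simp [TinfCol] at h
  | succ m ih =>
    rcases le_or_gt r (hgt c (m + 1)) with hrh | hrh
    · simp [tinfCol_of_le_hgt (Nat.le_add_left 1 m) hr hrh]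
    rcases (show m = 0 ∨ 1 ≤ m by omega) with rfl | hm
    · simp [TinfCol, Tcol] at h hrh
      omega
    rw [tinfCol_of_hgt_lt (by omega) (by omega : hgt c (m + 1) < r + 1)] at h
    rw [tinfCol_of_hgt_lt (by omega) hrh]
    simp only [Nat.add_sub_cancel] at *
    grind

end TinfCol

/-- The row of column `j` of `T(∞)` reached by an entry in row `r` of column `j - 1`, or `none`
if it is stopped. The test `2 ≤ r` stands for "row `r - 1` of column `j - 1` is occupied": the
columns of `T(∞)` have no gaps (`isSome_tinfCol_of_isSome_succ`). -/
noncomputable def nextRow (c : List ℕ) (j r : ℕ) : Option ℕ :=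
  if hgt c j = r ∧ HasLeftNb c j then some (r + 1)
  else if hgt c j < r ∧ ¬(hgt c j + 1 = r ∧ HasLeftNb c j ∧ 2 ≤ r) then some r
  else none

section Propagation

variable {c : List ℕ}

lemma tinfCol_succ_eq_some_iff {m r' a : ℕ} (hm : 1 ≤ m) (ha : a ≤ (c.take m).sum) :
    TinfCol c (m + 1) r' = some a ↔
      ∃ r, TinfCol c m r = some a ∧ nextRow c (m + 1) r = some r' := by
  rcases le_or_gt r' (hgt c (m + 1)) with hr' | hr'
  · have hT : TinfCol c (m + 1) r' ≠ some a := by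
      rcases Nat.eq_zero_or_pos r' with rfl | hr'0
      · simp [tinfCol_zero]
      · rw [tinfCol_of_le_hgt (by omega) hr'0 hr']
        have := sum_take_lt_Tentry (c := c) hr'0 (Nat.lt_succ_self m)
        grind
    simp only [hT, false_iff, not_exists, not_and, nextRow]
    grind
  rw [tinfCol_of_hgt_lt (by omega) hr', Nat.add_sub_cancel]
  constructor
  · split_ifs with hmoved
    · exact fun h => ⟨r' - 1, h, by simp only [nextRow]; grind⟩
    · refine fun h => ⟨r', h, ?_⟩
      have hfull : 2 ≤ r' → (TinfCol c m (r' - 1)).isSome := fun hr =>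
        isSome_tinfCol_of_isSome_succ (by omega)
          (by simp [Nat.sub_add_cancel (by omega : 1 ≤ r'), h])
      simp only [nextRow]
      grind
  · rintro ⟨r, h, hnext⟩
    simp only [nextRow] at hnext
    split_ifs at hnext with hbump hstay
    · obtain rfl := Option.some_inj.mp hnext
      simp [hbump.1, hbump.2, h]
    · obtain rfl := Option.some_inj.mp hnext
      rw [if_neg]
      · exact h
      rintro ⟨h1, h2, h3⟩
      refine hstay.2 ⟨h1, h2, ?_⟩
      by_contra hlt
      simp [show r - 1 = 0 by omega, tinfCol_zero] at h3

lemma exists_tinfCol_eq_some_of_le {m₁ m₂ x a : ℕ} (hm₁ : 1 ≤ m₁) (ha : a ≤ (c.take m₁).sum)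
    (hm : m₁ ≤ m₂) (h : TinfCol c m₂ x = some a) : ∃ y, TinfCol c m₁ y = some a := by
  induction m₂, hm using Nat.le_induction generalizing x with
  | base => exact ⟨x, h⟩
  | succ m₂ hm ih =>
    obtain ⟨r, hr, -⟩ :=
      (tinfCol_succ_eq_some_iff (by omega) (ha.trans (List.monotone_sum_take c hm))).mp h
    exact ih hr

lemma eq_of_nextRow_eq_none {m₁ m₂ x₁ x₂ a : ℕ}
    (h₁ : TinfCol c m₁ x₁ = some a) (hn₁ : nextRow c (m₁ + 1) x₁ = none)
    (h₂ : TinfCol c m₂ x₂ = some a) (hn₂ : nextRow c (m₂ + 1) x₂ = none) :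
    m₁ = m₂ ∧ x₁ = x₂ := by
  wlog hle : m₁ ≤ m₂ generalizing m₁ m₂ x₁ x₂
  · exact (this h₂ hn₂ h₁ hn₁ (by omega)).imp Eq.symm Eq.symm
  obtain rfl | hlt := hle.eq_or_lt
  · exact ⟨rfl, tinfCol_injective h₁ h₂⟩
  have hm₁ := (one_le_of_tinfCol_eq_some h₁).1
  have ha := (tinfCol_le_sum_take h₁).trans (List.monotone_sum_take c (Nat.le_succ m₁))
  obtain ⟨y, hy⟩ := exists_tinfCol_eq_some_of_le (by omega) ha hlt h₂
  obtain ⟨r, hr, hnext⟩ := (tinfCol_succ_eq_some_iff hm₁ (tinfCol_le_sum_take h₁)).mp hy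
  rw [tinfCol_injective hr h₁, hn₁] at hnext
  cases hnext

lemma lineB_one_iff {a i j : ℕ} :
    LineB c a i j Lab.one ↔ 2 ≤ j ∧ j ≤ c.length ∧
      ∃ x, TinfCol c (j - 1) x = some a ∧ nextRow c j x = none ∧ i = min x (hgt c j) := by
  have hmax : HasLeftNb c j → hgt c j ≤ maxHgt c j := hgt_le_maxHgt_of_hasLeftNb
  simp only [LineB, nextRow, ← hasLeftNb_iff]
  constructor
  · rintro ⟨hj2, hjl, hi, hline⟩
    refine ⟨hj2, hjl, ?_⟩
    rcases hline with ⟨_, _, hx⟩ | ⟨_, _, hx⟩ | ⟨_, _, _, hx⟩ | ⟨_, _, _, hx⟩ <;>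
      exact ⟨_, hx, by grind⟩
  · rintro ⟨hj2, hjl, x, hx, hnext, rfl⟩
    have hx1 := (one_le_of_tinfCol_eq_some hx).2
    have hxmax := tinfCol_row_le hx
    rw [Nat.sub_add_cancel (by omega)] at hxmax
    refine ⟨hj2, hjl, by grind, ?_⟩
    grind

lemma lineB_one_unique {a i₁ j₁ i₂ j₂ : ℕ} (h₁ : LineB c a i₁ j₁ Lab.one)
    (h₂ : LineB c a i₂ j₂ Lab.one) : i₁ = i₂ ∧ j₁ = j₂ := by
  obtain ⟨hj₁, -, x₁, hx₁, hn₁, rfl⟩ := lineB_one_iff.mp h₁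
  obtain ⟨hj₂, -, x₂, hx₂, hn₂, rfl⟩ := lineB_one_iff.mp h₂
  rw [← Nat.sub_add_cancel (by omega : 1 ≤ j₁)] at hn₁
  rw [← Nat.sub_add_cancel (by omega : 1 ≤ j₂)] at hn₂
  obtain ⟨hj, rfl⟩ := eq_of_nextRow_eq_none hx₁ hn₁ hx₂ hn₂
  obtain rfl : j₁ = j₂ := by omega
  exact ⟨rfl, rfl⟩

lemma lineB_star_of_tinfCol {a p q : ℕ} (hp : 1 ≤ p) (hpq : p < q) (hq : q ≤ c.length)
    (hhpq : hgt c p = hgt c q) (h : TinfCol c (q - 1) (hgt c q) = some a) :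
    LineB c a (hgt c q) q Lab.star :=
  ⟨by omega, hq, (one_le_of_tinfCol_eq_some h).2, hhpq ▸ hgt_le_maxHgt hp hpq, rfl,
    ⟨p, hp, hpq, hhpq⟩, h⟩

lemma exists_nextRow_eq_none {q tt m r a : ℕ} (hq : hgt c q = tt)
    (hgap : ∀ k, m < k → k < q → hgt c k ≠ tt) (hlast : TinfCol c (q - 1) tt ≠ some a)
    (hmq : m < q) (h : TinfCol c m r = some a) (hr : r ≤ tt) :
    ∃ m' x, m ≤ m' ∧ m' < q ∧ TinfCol c m' x = some a ∧ x ≤ tt ∧ nextRow c (m' + 1) x = none := by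
  cases hnext : nextRow c (m + 1) r with
  | none => exact ⟨m, r, le_rfl, hmq, h, hr, hnext⟩
  | some r' =>
    have h' := (tinfCol_succ_eq_some_iff (one_le_of_tinfCol_eq_some h).1
      (tinfCol_le_sum_take h)).mpr ⟨r, h, hnext⟩
    rcases (show m + 1 = q ∨ m + 1 < q by omega) with rfl | hmq'
    · simp only [nextRow, hq] at hnext
      split_ifs at hnext with hbump
      · exact absurd (hbump.1 ▸ h) hlast
      · omega
    · have hr' : r' ≤ tt := by
        have := hgap (m + 1) (by omega) hmq'
        simp only [nextRow] at hnext
        split_ifs at hnext <;> grind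
      obtain ⟨m', x, hm', hrest⟩ :=
        exists_nextRow_eq_none hq (fun k hk => hgap k (by omega)) hlast hmq' h' hr'
      exact ⟨m', x, by omega, hrest⟩
termination_by q - m

end Propagation

theorem statement8_general (c : List ℕ)
    (p q tt : ℕ) (hp : 1 ≤ p) (hq : q ≤ c.length) (hpq : p < q)
    (hhp : hgt c p = tt) (hhq : hgt c q = tt)
    (hnbr : ∀ j, p < j → j < q → hgt c j ≠ tt) :
    ∀ i j, p ≤ j → j < q → IsBox c i j → i ≤ tt →
      ¬ LineB c (Tentry c i j) tt q Lab.star →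
      (∃! x : ℕ × ℕ, LineB c (Tentry c i j) x.1 x.2 Lab.one) ∧
      (∀ i' j', LineB c (Tentry c i j) i' j' Lab.one →
        i' ≤ tt ∧ p < j' ∧ j' ≤ q) := by
  rintro i j hpj hjq ⟨hj, -, hi, hih⟩ hitt hstar
  have hlast : TinfCol c (q - 1) tt ≠ some (Tentry c i j) := fun h =>
    hstar (hhq ▸ lineB_star_of_tinfCol hp hpq hq (hhp.trans hhq.symm) (hhq ▸ h))
  obtain ⟨m, x, hjm, hmq, hx, hxtt, hnext⟩ := exists_nextRow_eq_none hhq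
    (fun k hk => hnbr k (by omega)) hlast hjq (tinfCol_of_le_hgt hj hi hih) hitt
  have hline : LineB c (Tentry c i j) (min x (hgt c (m + 1))) (m + 1) Lab.one :=
    lineB_one_iff.mpr ⟨by omega, by omega, x, by simpa using hx, hnext, rfl⟩
  refine ⟨⟨(_, _), hline, fun y hy => ?_⟩, fun i' j' h' => ?_⟩
  · obtain ⟨h₁, h₂⟩ := lineB_one_unique hy hline
    exact Prod.ext h₁ h₂
  · obtain ⟨rfl, rfl⟩ := lineB_one_unique h' hline
    omega

/-- let `C = C_p`, `C' = C_q` be neighbouring columns of `D` of height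
`tt` with `C` left of `C'`, and `ℓ_∗` the unique left-going `∗`-labelled line of
`ℓ(D)` ending at `C' ∩ R_tt`.  Every box of `D` lying in rows `R_1, …, R_tt` in a
column from `C` (inclusive) up to but excluding `C'`, unless its right-going line
of `ℓ(D)` is the line `ℓ_∗`, has exactly one right-going line of `ℓ(D)` labelled
`1`, whose right end-point lies in rows `R_1, …, R_tt` in a column strictly to the
right of `C` up to and including `C'`. -/
theorem statement8 (n : ℕ) (hn : 0 < n) (c : List ℕ) (hc : IsComposition c n)
    (p q tt : ℕ) (hp : 1 ≤ p) (hq : q ≤ c.length) (hpq : p < q)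
    (hhp : hgt c p = tt) (hhq : hgt c q = tt)
    (hnbr : ∀ j, p < j → j < q → hgt c j ≠ tt) :
    ∀ i j, p ≤ j → j < q → IsBox c i j → i ≤ tt →
      ¬ LineB c (Tentry c i j) tt q Lab.star →
      (∃! x : ℕ × ℕ, LineB c (Tentry c i j) x.1 x.2 Lab.one) ∧
      (∀ i' j', LineB c (Tentry c i j) i' j' Lab.one →
        i' ≤ tt ∧ p < j' ∧ j' ≤ q) :=
  statement8_general c p q tt hp hq hpq hhp hhq hnbr
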